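/- Let n ≥ 2 and σ ∈ (0,2). Let Γ : ℝ^n → ℝ be bounded and Lebesgue measurable with Γ ≤ 0 everywhere and Γ = 0 outside the closed ball of radius 3 centered at the origin. Let P := Γ * K_{2−σ}, and let x₀ with |x₀| ≤ 3 satisfy P(x₀) = inf_{ℝ^n} P. If R > 9 satisfies ((R−3)/6)^{−(n−2+σ)} ≤ 1/2, then for every x with |x| ≥ R one has P(x) ≥ P(x₀)/2; in particular −inf_{ℝ^n} P + inf_{|x|=R} P ≥ ½·(−inf_{ℝ^n} P). -/

import Mathlib

/-!
Write `K(y) = A |y|^{-(n-2+σ)}` with `A > 0`. Since `Γ ≤ 0` is supported in `B₃`, the kernel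
controls `P` from both sides by the mass `∫ Γ ≤ 0`: near the support `|x₀ - y| ≤ 6` gives
`P(x₀) ≤ A 6^{-(n-2+σ)} ∫ Γ`, and far away `|x - y| ≥ R - 3` gives
`P(x) ≥ A (R-3)^{-(n-2+σ)} ∫ Γ`. The ratio of the two bounds is `((R-3)/6)^{-(n-2+σ)} ≤ 1/2`.
-/

open MeasureTheory

noncomputable section

/-- The constant `A(n,α) = π^{α - n/2} Γ((n-α)/2) / Γ(α/2)`. -/
def rieszA (n : ℕ) (α : ℝ) : ℝ :=
  Real.pi ^ (α - (n : ℝ) / 2) * Real.Gamma (((n : ℝ) - α) / 2) / Real.Gamma (α / 2)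

/-- The Riesz kernel of order `2 - σ`: `K_{2-σ}(y) = A(n,2-σ)·|y|^{-n+2-σ}`. -/
def rieszKernel (n : ℕ) (σ : ℝ) (y : EuclideanSpace ℝ (Fin n)) : ℝ :=
  rieszA n (2 - σ) * ‖y‖ ^ (-(n : ℝ) + 2 - σ)

/-- The Riesz potential `P = Γ * K_{2-σ}` (convolution over `ℝⁿ`). -/
def rieszPotential (n : ℕ) (σ : ℝ) (Γ : EuclideanSpace ℝ (Fin n) → ℝ)
    (x : EuclideanSpace ℝ (Fin n)) : ℝ :=
  ∫ y : EuclideanSpace ℝ (Fin n), Γ y * rieszKernel n σ (x - y)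

open Metric

theorem integrable_of_abs_le_of_eq_zero_outside_closedBall {α : Type*} [PseudoMetricSpace α]
    [ProperSpace α] [MeasurableSpace α] {μ : Measure α} [IsFiniteMeasureOnCompacts μ]
    {f : α → ℝ} (hf : AEStronglyMeasurable f μ) {B : ℝ} (hB : ∀ x, |f x| ≤ B) {c : α} {r : ℝ}
    (hsupp : ∀ x ∉ closedBall c r, f x = 0) : Integrable f μ :=
  (Measure.integrableOn_of_bounded measure_closedBall_lt_top.ne hf
    (ae_of_all _ fun x => (Real.norm_eq_abs _).trans_le (hB x))).integrable_of_forall_notMem_eq_zero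
    hsupp

theorem rieszA_pos {n : ℕ} {α : ℝ} (hα : 0 < α) (hαn : α < n) : 0 < rieszA n α :=
  div_pos (mul_pos (Real.rpow_pos_of_pos Real.pi_pos _) (Real.Gamma_pos_of_pos (by linarith)))
    (Real.Gamma_pos_of_pos (by linarith))

section Riesz

variable {n : ℕ} {σ : ℝ}

theorem rieszKernel_nonneg (hσ : σ < 2) (hnσ : 2 - σ < n) (y : EuclideanSpace ℝ (Fin n)) :
    0 ≤ rieszKernel n σ y :=
  mul_nonneg (rieszA_pos (by linarith) hnσ).le (Real.rpow_nonneg (norm_nonneg y) _)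

theorem rieszKernel_le_of_le_norm (hσ : σ < 2) (hnσ : 2 - σ < n) {y : EuclideanSpace ℝ (Fin n)}
    {t : ℝ} (ht : 0 < t) (hty : t ≤ ‖y‖) :
    rieszKernel n σ y ≤ rieszA n (2 - σ) * t ^ (-(n : ℝ) + 2 - σ) :=
  mul_le_mul_of_nonneg_left (Real.rpow_le_rpow_of_nonpos ht hty (by linarith))
    (rieszA_pos (by linarith) hnσ).le

theorem le_rieszKernel_of_norm_le (hσ : σ < 2) (hnσ : 2 - σ < n) {y : EuclideanSpace ℝ (Fin n)}
    {t : ℝ} (hy : 0 < ‖y‖) (hyt : ‖y‖ ≤ t) :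
    rieszA n (2 - σ) * t ^ (-(n : ℝ) + 2 - σ) ≤ rieszKernel n σ y :=
  mul_le_mul_of_nonneg_left (Real.rpow_le_rpow_of_nonpos hy hyt (by linarith))
    (rieszA_pos (by linarith) hnσ).le

variable {Γ : EuclideanSpace ℝ (Fin n) → ℝ} {r : ℝ}

theorem rieszPotential_nonpos (hσ : σ < 2) (hnσ : 2 - σ < n) (hneg : ∀ z, Γ z ≤ 0)
    (x : EuclideanSpace ℝ (Fin n)) : rieszPotential n σ Γ x ≤ 0 :=
  integral_nonpos fun y => mul_nonpos_of_nonpos_of_nonneg (hneg y) (rieszKernel_nonneg hσ hnσ _)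

theorem integral_mul_le_rieszPotential (hσ : σ < 2) (hnσ : 2 - σ < n) (hΓ : Integrable Γ)
    (hneg : ∀ z, Γ z ≤ 0) (hsupp : ∀ z ∉ closedBall 0 r, Γ z = 0) {R : ℝ} (hrR : r < R)
    {x : EuclideanSpace ℝ (Fin n)} (hx : R ≤ ‖x‖) :
    (∫ y, Γ y) * (rieszA n (2 - σ) * (R - r) ^ (-(n : ℝ) + 2 - σ)) ≤ rieszPotential n σ Γ x := by
  set c := rieszA n (2 - σ) * (R - r) ^ (-(n : ℝ) + 2 - σ)
  have hpoint : ∀ y, Γ y * c ≤ Γ y * rieszKernel n σ (x - y) := by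
    intro y
    by_cases hy : y ∈ closedBall 0 r
    · have hxy : R - r ≤ ‖x - y‖ := by
        have := norm_sub_norm_le x y
        rw [mem_closedBall_zero_iff] at hy
        linarith
      exact mul_le_mul_of_nonpos_left
        (rieszKernel_le_of_le_norm hσ hnσ (by linarith) hxy) (hneg y)
    · simp [hsupp y hy]
  -- Comparing the nonnegative functions `-Γ K ≤ -Γ c` needs integrability of `-Γ c` only.
  have h := integral_mono_of_nonneg (f := fun y => -(Γ y * rieszKernel n σ (x - y)))
    (g := fun y => -(Γ y * c))
    (ae_of_all _ fun y => neg_nonneg.2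
      (mul_nonpos_of_nonpos_of_nonneg (hneg y) (rieszKernel_nonneg hσ hnσ (x - y))))
    (hΓ.mul_const c).neg (ae_of_all _ fun y => neg_le_neg (hpoint y))
  simpa only [rieszPotential, integral_neg, integral_mul_const, neg_le_neg_iff] using h

/- `P x ≠ 0` stands in for the integrability of `y ↦ Γ y K(x - y)`: a non-integrable integrand
would have the junk integral `0`. -/
theorem rieszPotential_le_integral_mul (hσ : σ < 2) (hnσ : 2 - σ < n) (hΓ : Integrable Γ)
    (hneg : ∀ z, Γ z ≤ 0) (hsupp : ∀ z ∉ closedBall 0 r, Γ z = 0)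
    {x : EuclideanSpace ℝ (Fin n)} (hx : ‖x‖ ≤ r) (hPx : rieszPotential n σ Γ x ≠ 0) :
    rieszPotential n σ Γ x ≤ (∫ y, Γ y) * (rieszA n (2 - σ) * (2 * r) ^ (-(n : ℝ) + 2 - σ)) := by
  have : NeZero n := ⟨by rintro rfl; rw [Nat.cast_zero] at hnσ; linarith⟩
  have hpoint : ∀ᵐ y, Γ y * rieszKernel n σ (x - y) ≤
      Γ y * (rieszA n (2 - σ) * (2 * r) ^ (-(n : ℝ) + 2 - σ)) := by
    filter_upwards [volume.ae_ne x] with y hyx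
    by_cases hy : y ∈ closedBall 0 r
    · have hxy : ‖x - y‖ ≤ 2 * r := by
        have := norm_sub_le x y
        rw [mem_closedBall_zero_iff] at hy
        linarith
      exact mul_le_mul_of_nonpos_left
        (le_rieszKernel_of_norm_le hσ hnσ (norm_pos_iff.2 (sub_ne_zero.2 hyx.symm)) hxy) (hneg y)
    · simp [hsupp y hy]
  have h := integral_mono_ae (Integrable.of_integral_ne_zero hPx) (hΓ.mul_const _) hpoint
  rwa [integral_mul_const] at h

theorem div_two_le_rieszPotential_of_le_norm (hσ : σ < 2) (hnσ : 2 - σ < n) (hΓ : Integrable Γ)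
    (hneg : ∀ z, Γ z ≤ 0) (hsupp : ∀ z ∉ closedBall 0 r, Γ z = 0) (hr : 0 < r)
    {x₀ : EuclideanSpace ℝ (Fin n)} (hx₀ : ‖x₀‖ ≤ r) (hPx₀ : rieszPotential n σ Γ x₀ ≠ 0)
    {R : ℝ} (hrR : r < R) (hRsmall : ((R - r) / (2 * r)) ^ (-((n : ℝ) - 2 + σ)) ≤ 1 / 2)
    {x : EuclideanSpace ℝ (Fin n)} (hx : R ≤ ‖x‖) :
    rieszPotential n σ Γ x₀ / 2 ≤ rieszPotential n σ Γ x := by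
  set ρ := ((R - r) / (2 * r)) ^ (-((n : ℝ) - 2 + σ))
  have hρ : 0 ≤ ρ := Real.rpow_nonneg (div_nonneg (by linarith) (by linarith)) _
  have hsplit : (R - r) ^ (-(n : ℝ) + 2 - σ) = ρ * (2 * r) ^ (-(n : ℝ) + 2 - σ) := by
    rw [show -(n : ℝ) + 2 - σ = -((n : ℝ) - 2 + σ) by ring,
      ← Real.mul_rpow (div_nonneg (by linarith) (by linarith)) (by linarith),
      div_mul_cancel₀ _ (by positivity)]
  have hPx₀_nonpos := rieszPotential_nonpos hσ hnσ hneg x₀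
  calc rieszPotential n σ Γ x₀ / 2
      ≤ ρ * rieszPotential n σ Γ x₀ := by nlinarith
    _ ≤ ρ * ((∫ y, Γ y) * (rieszA n (2 - σ) * (2 * r) ^ (-(n : ℝ) + 2 - σ))) :=
      mul_le_mul_of_nonneg_left
        (rieszPotential_le_integral_mul hσ hnσ hΓ hneg hsupp hx₀ hPx₀) hρ
    _ = (∫ y, Γ y) * (rieszA n (2 - σ) * (R - r) ^ (-(n : ℝ) + 2 - σ)) := by
      rw [hsplit]; ring
    _ ≤ rieszPotential n σ Γ x := integral_mul_le_rieszPotential hσ hnσ hΓ hneg hsupp hrR hx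

end Riesz

/-- decay of the potential. If `((R-3)/6)^{-(n-2+σ)} ≤ 1/2` then `P ≥ P(x₀)/2`
outside `B_R`, and `-inf P + inf_{|x|=R} P ≥ (1/2)(-inf P)`. -/
theorem stmt9 (n : ℕ) (hn : 2 ≤ n) (σ : ℝ) (hσ : σ ∈ Set.Ioo (0 : ℝ) 2)
    (Γ : EuclideanSpace ℝ (Fin n) → ℝ)
    (hb : ∃ B : ℝ, ∀ z, |Γ z| ≤ B) (hm : Measurable Γ)
    (hneg : ∀ z, Γ z ≤ 0)
    (hsupp : ∀ z : EuclideanSpace ℝ (Fin n), z ∉ Metric.closedBall 0 3 → Γ z = 0)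
    (P : EuclideanSpace ℝ (Fin n) → ℝ) (hP : P = rieszPotential n σ Γ)
    (x₀ : EuclideanSpace ℝ (Fin n)) (hx₀ : ‖x₀‖ ≤ 3)
    (hmin : ∀ z, P x₀ ≤ P z)
    (R : ℝ) (hR : 9 < R)
    (hRsmall : ((R - 3) / 6) ^ (-((n : ℝ) - 2 + σ)) ≤ 1 / 2) :
    (∀ x : EuclideanSpace ℝ (Fin n), R ≤ ‖x‖ → P x₀ / 2 ≤ P x) ∧
    (1 / 2) * (-(⨅ z : EuclideanSpace ℝ (Fin n), P z)) ≤
      -(⨅ z : EuclideanSpace ℝ (Fin n), P z) +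
        ⨅ x : Metric.sphere (0 : EuclideanSpace ℝ (Fin n)) R, P x := by
  obtain ⟨hσ0, hσ2⟩ := hσ
  have hnσ : 2 - σ < n := by
    have : (2 : ℝ) ≤ n := by exact_mod_cast hn
    linarith
  obtain ⟨B, hB⟩ := hb
  have hΓ : Integrable Γ :=
    integrable_of_abs_le_of_eq_zero_outside_closedBall hm.aestronglyMeasurable hB hsupp
  have hfar : ∀ x : EuclideanSpace ℝ (Fin n), R ≤ ‖x‖ → P x₀ / 2 ≤ P x := by
    intro x hx
    by_cases h0 : P x₀ = 0
    · simpa [h0] using hmin x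
    · subst hP
      exact div_two_le_rieszPotential_of_le_norm hσ2 hnσ hΓ hneg hsupp three_pos hx₀ h0
        (by linarith) (by rwa [show (2 : ℝ) * 3 = 6 by norm_num]) hx
  have hleast : IsLeast (Set.range P) (P x₀) := ⟨⟨x₀, rfl⟩, by rintro _ ⟨z, rfl⟩; exact hmin z⟩
  have hinf : ⨅ z, P z = P x₀ := hleast.isGLB.ciInf_eq
  have : NeZero n := ⟨by omega⟩
  have : Nonempty (sphere (0 : EuclideanSpace ℝ (Fin n)) R) :=
    (NormedSpace.sphere_nonempty.2 (by linarith)).to_subtype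
  have hsphere : P x₀ / 2 ≤ ⨅ x : sphere (0 : EuclideanSpace ℝ (Fin n)) R, P x :=
    le_ciInf fun x => hfar x (mem_sphere_zero_iff_norm.1 x.2).ge
  exact ⟨hfar, by rw [hinf]; linarith⟩
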